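/- arXiv:2403.18688 — 2 statements merged into one kernel-verified Lean document; each statement's English description precedes it below -/
import Mathlib

section
/- Let V be an anisotropic quadratic space over Q_p of dimension 3 with quadratic form Q. Then V contains a unique maximal Z_p-lattice on which Q takes values in Z_p, namely the set of all v in V with Q(v) in Z_p. -/
/-!
If `Q` is anisotropic over `ℚ_p` and `Q x, Q y ∈ ℤ_p`, then `b = polar Q x y ∈ ℤ_p`: otherwise
Hensel's lemma solves `(Q y / b²) z² + z + Q x = 0` in `ℤ_p`, so `x + (z / b) • y` is isotropic,
hence `x = -t • y` with `t = z / b`, and then `|b| = |2 t Q y| ≤ |t| ≤ 1 / |b|`. Thus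
`{v | Q v ∈ ℤ_p}` is closed under addition, i.e. a `ℤ_p`-module. It contains a nonzero multiple of
every vector, and it is bounded, since by compactness of a shell an anisotropic form on a
finite-dimensional space satisfies `|Q v| ≥ ε ‖v‖²`; a bounded `ℤ_p`-module is finitely generated.
-/

open Polynomial QuadraticMap Metric

theorem QuadraticMap.continuous_of_finiteDimensional {𝕜 E : Type*} [NontriviallyNormedField 𝕜]
    [CompleteSpace 𝕜] [NormedAddCommGroup E] [NormedSpace 𝕜 E] [FiniteDimensional 𝕜 E]
    (Q : QuadraticForm 𝕜 E) : Continuous Q := by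
  obtain ⟨B, rfl⟩ := LinearMap.BilinMap.toQuadraticMap_surjective Q
  let f : E →ₗ[𝕜] E →L[𝕜] 𝕜 := LinearMap.toContinuousLinearMap.toLinearMap ∘ₗ B
  exact f.continuous_of_finiteDimensional.clm_apply continuous_id

theorem QuadraticMap.Anisotropic.exists_pos_mul_norm_sq_le {𝕜 E : Type*}
    [NontriviallyNormedField 𝕜] [NormedAddCommGroup E] [NormedSpace 𝕜 E] [ProperSpace E]
    {Q : QuadraticForm 𝕜 E} (hQ : Q.Anisotropic) (hQc : Continuous Q) :
    ∃ ε > 0, ∀ x, ε * ‖x‖ ^ 2 ≤ ‖Q x‖ := by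
  rcases subsingleton_or_nontrivial E with hE | hE
  · exact ⟨1, one_pos, fun x => by simp [Subsingleton.elim x 0]⟩
  obtain ⟨c, hc⟩ := NormedField.exists_lt_norm 𝕜 1
  set K : Set E := closedBall 0 1 \ ball 0 (1 / ‖c‖)
  have hK : IsCompact K := (isCompact_closedBall 0 1).diff isOpen_ball
  have hK_ne_zero : ∀ y ∈ K, y ≠ 0 := by
    rintro y ⟨-, hy⟩ rfl
    exact hy (mem_ball_self (by positivity))
  have hrescale : ∀ x ≠ (0 : E), ∃ d : 𝕜, d • x ∈ K := by
    intro x hx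
    obtain ⟨d, -, hlt, hle, -⟩ := rescale_to_shell hc one_pos hx
    exact ⟨d, mem_closedBall_zero_iff.2 hlt.le, fun h => (mem_ball_zero_iff.1 h).not_ge hle⟩
  obtain ⟨x₀, hx₀⟩ := exists_ne (0 : E)
  obtain ⟨d₀, hd₀⟩ := hrescale x₀ hx₀
  obtain ⟨y₀, hy₀, hmin⟩ := hK.exists_isMinOn ⟨_, hd₀⟩ hQc.norm.continuousOn
  refine ⟨‖Q y₀‖, norm_pos_iff.2 fun h => hK_ne_zero y₀ hy₀ (hQ y₀ h), fun x => ?_⟩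
  rcases eq_or_ne x 0 with rfl | hx
  · simp
  obtain ⟨d, hd⟩ := hrescale x hx
  have hdx : ‖d‖ * ‖x‖ ≤ 1 := norm_smul d x ▸ mem_closedBall_zero_iff.1 hd.1
  calc ‖Q y₀‖ * ‖x‖ ^ 2 ≤ ‖Q (d • x)‖ * ‖x‖ ^ 2 := by gcongr; exact hmin hd
    _ = (‖d‖ * ‖x‖) ^ 2 * ‖Q x‖ := by
      rw [QuadraticMap.map_smul, smul_eq_mul, norm_mul, norm_mul]; ring
    _ ≤ ‖Q x‖ := mul_le_of_le_one_left (norm_nonneg _) (pow_le_one₀ (by positivity) hdx)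

section Padic

variable {p : ℕ} [Fact p.Prime]

theorem PadicInt.coe_smul_eq_smul {V : Type*} [AddCommGroup V] [Module ℚ_[p] V] [Module ℤ_[p] V]
    [IsScalarTower ℤ_[p] ℚ_[p] V] (z : ℤ_[p]) (v : V) : (z : ℚ_[p]) • v = z • v := by
  rw [← algebraMap_smul ℚ_[p] z v, PadicInt.algebraMap_apply]

theorem Submodule.fg_of_forall_norm_equivFun_le {V ι : Type*} [AddCommGroup V] [Module ℚ_[p] V]
    [Module ℤ_[p] V] [IsScalarTower ℤ_[p] ℚ_[p] V] [Fintype ι] (b : Module.Basis ι ℚ_[p] V)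
    {M : Submodule ℤ_[p] V} {C : ℝ} (hM : ∀ v ∈ M, ‖b.equivFun v‖ ≤ C) : M.FG := by
  obtain ⟨c, hc⟩ := NormedField.exists_lt_norm ℚ_[p] |C|
  have hc₀ : c ≠ 0 := norm_pos_iff.1 ((abs_nonneg C).trans_lt hc)
  refine (Submodule.fg_span (Set.finite_range fun i => c • b i)).of_le fun v hv => ?_
  have hcoeff (i : ι) : ‖b.equivFun v i / c‖ ≤ 1 := by
    rw [norm_div, div_le_one (norm_pos_iff.2 hc₀)]
    exact ((norm_le_pi_norm _ i).trans (hM v hv)).trans ((le_abs_self C).trans hc.le)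
  rw [Submodule.mem_span_range_iff_exists_fun]
  choose z hz using fun i =>
    (⟨⟨_, hcoeff i⟩, rfl⟩ : ∃ z : ℤ_[p], (z : ℚ_[p]) = b.equivFun v i / c)
  refine ⟨z, ?_⟩
  simp_rw [← PadicInt.coe_smul_eq_smul, smul_smul, hz, div_mul_cancel₀ _ hc₀]
  exact b.sum_equivFun v

theorem PadicInt.exists_mul_sq_add_add_eq_zero {A : ℤ_[p]} (hA : ‖A‖ < 1) (C : ℤ_[p]) :
    ∃ z : ℤ_[p], A * z ^ 2 + z + C = 0 := by
  have hA_mul (w : ℤ_[p]) : ‖A * w‖ < 1 := by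
    rw [norm_mul]
    exact (mul_le_of_le_one_right (norm_nonneg A) (PadicInt.norm_le_one w)).trans_lt hA
  set F : ℤ_[p][X] := Polynomial.C A * X ^ 2 + X + Polynomial.C C
  have hderiv : ‖F.derivative.aeval (-C)‖ = 1 := by
    have h : F.derivative.aeval (-C) = 1 + -(A * (2 * C)) := by simp [F]; ring
    rw [h, IsUltrametricDist.norm_add_eq_max_of_norm_ne_norm, norm_one, norm_neg]
    · exact max_eq_left (hA_mul _).le
    · rw [norm_one, norm_neg]; exact (hA_mul _).ne'
  have hsmall : ‖F.aeval (-C)‖ < ‖F.derivative.aeval (-C)‖ ^ 2 := by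
    rw [hderiv, one_pow, show F.aeval (-C) = A * C ^ 2 by simp [F]]
    exact hA_mul _
  obtain ⟨z, hz, -⟩ := hensels_lemma hsmall
  exact ⟨z, by simpa [F] using hz⟩

namespace QuadraticMap.Anisotropic

variable {V : Type*} [AddCommGroup V] [Module ℚ_[p] V] {Q : QuadraticForm ℚ_[p] V}

theorem norm_polar_le_one (hQ : Q.Anisotropic) {x y : V} (hx : ‖Q x‖ ≤ 1) (hy : ‖Q y‖ ≤ 1) :
    ‖polar Q x y‖ ≤ 1 := by
  by_contra! hb
  set b := polar Q x y with hb_def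
  have hb₀ : b ≠ 0 := norm_pos_iff.mp (one_pos.trans hb)
  have hA : ‖Q y / b ^ 2‖ < 1 := by
    rw [norm_div, norm_pow, div_lt_one (by positivity)]
    nlinarith
  obtain ⟨z, hz⟩ :=
    PadicInt.exists_mul_sq_add_add_eq_zero (A := ⟨Q y / b ^ 2, hA.le⟩) hA ⟨Q x, hx⟩
  have hz' : Q y / b ^ 2 * z ^ 2 + z + Q x = 0 := by
    have := congrArg ((↑) : ℤ_[p] → ℚ_[p]) hz
    push_cast at this
    exact this
  set t : ℚ_[p] := z / b
  have hiso : Q (x + t • y) = 0 := by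
    rw [QuadraticMap.map_add (⇑Q), QuadraticMap.map_smul, polar_smul_right, smul_eq_mul,
      smul_eq_mul, ← hb_def, ← hz']
    simp only [t]
    field_simp
    ring
  have hxy : x = -t • y := by
    rw [neg_smul]
    exact eq_neg_of_add_eq_zero_left (hQ _ hiso)
  have hb_eq : b = -t * (2 * Q y) := by
    rw [hb_def, hxy, polar_smul_left, polar_self, smul_eq_mul, nsmul_eq_mul, Nat.cast_ofNat]
  have htb : ‖t‖ * ‖b‖ ≤ 1 := by
    rw [norm_div, div_mul_cancel₀ _ (norm_ne_zero_iff.mpr hb₀)]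
    exact z.2
  have hbt : ‖b‖ ≤ ‖t‖ := by
    rw [hb_eq, norm_mul, norm_neg, norm_mul]
    exact mul_le_of_le_one_right (norm_nonneg t)
      (mul_le_one₀ (IsUltrametricDist.norm_natCast_le_one ℚ_[p] 2) (norm_nonneg _) hy)
  nlinarith [norm_nonneg b]

variable [Module ℤ_[p] V] [IsScalarTower ℤ_[p] ℚ_[p] V]

def integralSubmodule (hQ : Q.Anisotropic) : Submodule ℤ_[p] V where
  carrier := {v | ‖Q v‖ ≤ 1}
  zero_mem' := by simp
  add_mem' {x y} hx hy := by
    rw [Set.mem_ofPred_eq, QuadraticMap.map_add (⇑Q)]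
    exact IsUltrametricDist.norm_add_le_max _ _ |>.trans <| max_le
      ((IsUltrametricDist.norm_add_le_max _ _).trans (max_le hx hy)) (hQ.norm_polar_le_one hx hy)
  smul_mem' z v hv := by
    rw [Set.mem_ofPred_eq, ← PadicInt.coe_smul_eq_smul, QuadraticMap.map_smul, smul_eq_mul,
      norm_mul, norm_mul]
    exact mul_le_one₀ (mul_le_one₀ z.2 (norm_nonneg _) z.2) (norm_nonneg _) hv

theorem mem_integralSubmodule (hQ : Q.Anisotropic) {v : V} :
    v ∈ hQ.integralSubmodule ↔ ‖Q v‖ ≤ 1 := Iff.rfl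

theorem span_integralSubmodule (hQ : Q.Anisotropic) :
    Submodule.span ℚ_[p] (hQ.integralSubmodule : Set V) = ⊤ := by
  refine Submodule.eq_top_iff'.2 fun v => ?_
  obtain ⟨c, hc₀, hc⟩ :=
    NormedField.exists_norm_lt ℚ_[p] (inv_pos.2 (by positivity : 0 < ‖Q v‖ + 1))
  have hc₁ : (‖Q v‖ + 1) * ‖c‖ < 1 := by
    rwa [← mul_one (‖Q v‖ + 1)⁻¹, lt_inv_mul_iff₀ (by positivity)] at hc
  have hcv : c • v ∈ hQ.integralSubmodule := by
    rw [mem_integralSubmodule, QuadraticMap.map_smul, smul_eq_mul, norm_mul, norm_mul]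
    nlinarith [norm_nonneg (Q v)]
  exact (Submodule.smul_mem_iff _ (norm_pos_iff.1 hc₀)).1 (Submodule.subset_span hcv)

theorem integralSubmodule_fg [FiniteDimensional ℚ_[p] V] (hQ : Q.Anisotropic) :
    hQ.integralSubmodule.FG := by
  let b := Module.finBasis ℚ_[p] V
  let Q' := Q.comp b.equivFun.symm.toLinearMap
  have hQ' : Q'.Anisotropic := fun x hx => b.equivFun.symm.injective <| by
    simpa using hQ _ hx
  obtain ⟨ε, hε, hε_le⟩ := hQ'.exists_pos_mul_norm_sq_le Q'.continuous_of_finiteDimensional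
  refine Submodule.fg_of_forall_norm_equivFun_le b (C := √ε⁻¹) fun v hv => ?_
  rw [Real.le_sqrt (norm_nonneg _) (inv_nonneg.2 hε.le), ← mul_one ε⁻¹, le_inv_mul_iff₀ hε]
  exact (hε_le _).trans (by simpa [Q'] using hQ.mem_integralSubmodule.1 hv)

end QuadraticMap.Anisotropic

end Padic

/-- An anisotropic 3-dimensional quadratic space `(V, Q)` over `ℚ_p` contains a
unique maximal integral `ℤ_p`-lattice, namely `{v ∈ V | Q(v) ∈ ℤ_p}` (i.e. `‖Q v‖ ≤ 1`):
this set is a `ℤ_p`-lattice containing every integral lattice. -/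
theorem stmt0 (p : ℕ) [Fact p.Prime]
    (V : Type*) [AddCommGroup V] [Module ℚ_[p] V] [Module ℤ_[p] V]
    [IsScalarTower ℤ_[p] ℚ_[p] V]
    (hdim : Module.finrank ℚ_[p] V = 3)
    (Q : QuadraticForm ℚ_[p] V) (haniso : Q.Anisotropic) :
    ∃ M : Submodule ℤ_[p] V,
      (M : Set V) = {v : V | ‖Q v‖ ≤ 1} ∧
      (M.FG ∧ Submodule.span ℚ_[p] (M : Set V) = ⊤) ∧
      ∀ L : Submodule ℤ_[p] V,
        (L.FG ∧ Submodule.span ℚ_[p] (L : Set V) = ⊤) →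
        (∀ v ∈ L, ‖Q v‖ ≤ 1) → L ≤ M := by
  have : FiniteDimensional ℚ_[p] V := .of_finrank_eq_succ hdim
  exact ⟨haniso.integralSubmodule, rfl,
    ⟨haniso.integralSubmodule_fg, haniso.span_integralSubmodule⟩, fun L _ hL v hv => hL v hv⟩
end

section
/- Let L = L[ϖ] ⊕ L[1] ⊕ L[ϖ⁻¹] be a Z_p-lattice in a 3-dimensional quadratic space over Q_p decomposing into rank-one eigenlattices, with L[ϖ], L[ϖ⁻¹] isotropic and pairing to Z_p^× with each other, L[1] unimodular and orthogonal to both. Then for every j ∈ Z, the lattice L_j := p^j L[ϖ] ⊕ L[1] ⊕ p^{−j} L[ϖ⁻¹] is unimodular, and L_j and L_{j+1} are p-neighbours. -/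
/-!
In the basis `(w⁺, e, w⁻)` the lattice `L_j` is the `ℤ_p`-span of the rescaled basis
`(p^j w⁺, e, p^{-j} w⁻)`, i.e. `{v | ‖v₀‖ ≤ ‖p^j‖, ‖v₁‖ ≤ 1, ‖v₂‖ ≤ ‖p^{-j}‖}`. Its Gram matrix is
that of `(w⁺, e, w⁻)`: antidiagonal with unit entries, because the weights of `w⁺` and `w⁻`
multiply to `1`. A lattice with a basis whose Gram matrix is a permutation matrix times units is
self-dual, since pairing with the partner of the `i`-th basis vector reads off the `i`-th
coordinate up to a unit. Going from `L_j` to `L_{j+1}` tightens the bound on `v₀` by a factor `p`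
and relaxes the one on `v₂`, so on `L_j` the intersection `L_j ∩ L_{j+1}` is the kernel of the
surjection `v ↦ v₀/p^j mod p` onto `𝔽_p`; symmetrically for `L_{j+1}` with `v₂`.
-/

/-- A `ℤ_p`-lattice `L` in a `ℚ_p`-quadratic space is unimodular (self-dual) if it is a full
lattice equal to its dual `{w | ⟨w, L⟩ ⊆ ℤ_p}` with respect to the bilinear form
`⟨v,w⟩ = Q(v+w) − Q(v) − Q(w)`. -/
def IsUnimodularLattice (p : ℕ) [Fact p.Prime] {V : Type*} [AddCommGroup V]
    [Module ℚ_[p] V] [Module ℤ_[p] V] [IsScalarTower ℤ_[p] ℚ_[p] V]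
    (Q : QuadraticForm ℚ_[p] V) (L : Submodule ℤ_[p] V) : Prop :=
  L.FG ∧ Submodule.span ℚ_[p] (L : Set V) = ⊤ ∧
    (L : Set V) = {w : V | ∀ l ∈ L, ‖QuadraticMap.polar (⇑Q) w l‖ ≤ 1}

open QuadraticMap Submodule IsLocalRing

theorem Padic.norm_le_norm_p_mul_iff_lt {p : ℕ} [Fact p.Prime] {x t : ℚ_[p]} (ht : t ≠ 0) :
    ‖x‖ ≤ ‖(p : ℚ_[p]) * t‖ ↔ ‖x‖ < ‖t‖ := by
  have h := Padic.norm_le_pow_iff_norm_lt_pow_add_one (x / t) (-1)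
  rw [norm_div, zpow_neg_one, neg_add_cancel, zpow_zero, div_le_iff₀ (norm_pos_iff.2 ht),
    div_lt_one (norm_pos_iff.2 ht)] at h
  rwa [norm_mul, Padic.norm_p]

theorem Padic.natCast_p_ne_zero {p : ℕ} [Fact p.Prime] : (p : ℚ_[p]) ≠ 0 :=
  Nat.cast_ne_zero.2 (Fact.out : p.Prime).ne_zero

theorem PadicInt.mem_range_algebraMap_iff {p : ℕ} [Fact p.Prime] {x : ℚ_[p]} :
    x ∈ Set.range (algebraMap ℤ_[p] ℚ_[p]) ↔ ‖x‖ ≤ 1 :=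
  ⟨by rintro ⟨z, rfl⟩; exact z.norm_le_one, fun hx => ⟨⟨x, hx⟩, rfl⟩⟩

theorem PadicInt.card_quotient_comap_maximalIdeal {p : ℕ} [Fact p.Prime] {M : Type*}
    [AddCommGroup M] [Module ℤ_[p] M] {f : M →ₗ[ℤ_[p]] ℤ_[p]} (hf : Function.Surjective f) :
    Nat.card (M ⧸ Submodule.comap f (maximalIdeal ℤ_[p])) = p := by
  have hsurj : Function.Surjective ((maximalIdeal ℤ_[p]).mkQ ∘ₗ f) :=
    (mkQ_surjective _).comp hf
  have hker : LinearMap.ker ((maximalIdeal ℤ_[p]).mkQ ∘ₗ f) =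
      Submodule.comap f (maximalIdeal ℤ_[p]) := by
    rw [LinearMap.ker_comp, ker_mkQ]
  rw [← hker, Nat.card_congr (LinearMap.quotKerEquivOfSurjective _ hsurj).toEquiv]
  conv_rhs => rw [← Nat.card_zmod p]
  exact Nat.card_congr (PadicInt.residueField (p := p)).toEquiv

section Gram

variable {p : ℕ} [Fact p.Prime] {V : Type*} [AddCommGroup V] [Module ℚ_[p] V] {ι : Type*}

def IsUnitMonomialGram (Q : QuadraticForm ℚ_[p] V) (c : ι → V) (σ : Equiv.Perm ι) : Prop :=
  (∀ i l, l ≠ σ i → polar Q (c i) (c l) = 0) ∧ ∀ i, ‖polar Q (c i) (c (σ i))‖ = 1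

theorem isUnitMonomialGram_of_hyperbolic {Q : QuadraticForm ℚ_[p] V} {wp e wm : V}
    (hQwp : Q wp = 0) (hQwm : Q wm = 0) (hpair : ‖polar Q wp wm‖ = 1)
    (hoe1 : polar Q wp e = 0) (hoe2 : polar Q wm e = 0) (he : ‖polar Q e e‖ = 1) :
    IsUnitMonomialGram Q ![wp, e, wm] Fin.revPerm := by
  refine ⟨fun i l hl => ?_, fun i => ?_⟩
  · fin_cases i <;> fin_cases l <;> simp_all [polar_self, polar_comm Q e]
  · fin_cases i <;> simp_all [polar_comm Q wm]

theorem IsUnitMonomialGram.smul {Q : QuadraticForm ℚ_[p] V} {c : ι → V} {σ : Equiv.Perm ι}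
    (hc : IsUnitMonomialGram Q c σ) {t : ι → ℚ_[p]} (ht : ∀ i, ‖t i‖ * ‖t (σ i)‖ = 1) :
    IsUnitMonomialGram Q (fun i => t i • c i) σ := by
  refine ⟨fun i l hl => ?_, fun i => ?_⟩
  · simp [polar_smul_left, polar_smul_right, hc.1 i l hl]
  · rw [polar_smul_left, polar_smul_right, smul_eq_mul, smul_eq_mul, norm_mul, norm_mul,
      hc.2 i, mul_one, ht]

theorem IsUnitMonomialGram.norm_polar_basis [Fintype ι] {Q : QuadraticForm ℚ_[p] V}
    {c : Module.Basis ι ℚ_[p] V} {σ : Equiv.Perm ι} (hc : IsUnitMonomialGram Q c σ) (w : V)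
    (i : ι) : ‖polar Q w (c (σ i))‖ = ‖c.repr w i‖ := by
  classical
  have hexp : polar Q w (c (σ i)) = ∑ k, c.repr w k * polar Q (c k) (c (σ i)) := by
    conv_lhs => rw [← c.sum_repr w, ← polarBilin_apply_apply, map_sum, LinearMap.sum_apply]
    simp only [map_smul, LinearMap.smul_apply, polarBilin_apply_apply, smul_eq_mul]
  rw [hexp, Finset.sum_eq_single i
    (fun k _ hk => by rw [hc.1 k (σ i) (σ.injective.ne hk.symm), mul_zero]) (by simp),
    norm_mul, hc.2 i, mul_one]

theorem Module.Basis.norm_repr_isUnitSMul (b : Module.Basis ι ℚ_[p] V) {t : ι → ℚ_[p]}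
    (ht : ∀ i, t i ≠ 0) (v : V) (i : ι) :
    ‖(b.isUnitSMul fun i => (ht i).isUnit).repr v i‖ = ‖b.repr v i‖ / ‖t i‖ := by
  simp [Module.Basis.repr_isUnitSMul, Units.smul_def, div_eq_inv_mul]

end Gram

section Lattice

variable {p : ℕ} [Fact p.Prime] {V : Type*} [AddCommGroup V] [Module ℚ_[p] V]
  [Module ℤ_[p] V] {ι : Type*}

noncomputable def weightedLattice (b : Module.Basis ι ℚ_[p] V) (t : ι → ℚ_[p]) :
    Submodule ℤ_[p] V :=
  span ℤ_[p] (Set.range fun i => t i • b i)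

theorem weightedLattice_eq_span_isUnitSMul (b : Module.Basis ι ℚ_[p] V) {t : ι → ℚ_[p]}
    (ht : ∀ i, t i ≠ 0) :
    weightedLattice b t = span ℤ_[p] (Set.range (b.isUnitSMul fun i => (ht i).isUnit)) := by
  rw [weightedLattice]
  congr 2
  ext i
  rw [Module.Basis.isUnitSMul_apply]

variable [IsScalarTower ℤ_[p] ℚ_[p] V]

theorem mem_span_basis_iff_norm_repr_le_one (c : Module.Basis ι ℚ_[p] V) (v : V) :
    v ∈ span ℤ_[p] (Set.range c) ↔ ∀ i, ‖c.repr v i‖ ≤ 1 := by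
  simp only [c.mem_span_iff_repr_mem ℤ_[p], PadicInt.mem_range_algebraMap_iff]

theorem forall_mem_span_norm_polar_le_one_iff (Q : QuadraticForm ℚ_[p] V) (s : Set V) (w : V) :
    (∀ l ∈ span ℤ_[p] s, ‖polar Q w l‖ ≤ 1) ↔ ∀ l ∈ s, ‖polar Q w l‖ ≤ 1 := by
  refine ⟨fun h l hl => h l (subset_span hl), fun h l hl => ?_⟩
  induction hl using span_induction with
  | mem l hl => exact h l hl
  | zero => simp
  | add x y _ _ hx hy =>
    rw [polar_add_right]
    exact (Padic.nonarchimedean _ _).trans (max_le hx hy)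
  | smul a x _ hx =>
    rw [← algebraMap_smul ℚ_[p], polar_smul_right, smul_eq_mul, norm_mul]
    exact mul_le_one₀ a.norm_le_one (norm_nonneg _) hx

theorem IsUnitMonomialGram.isUnimodularLattice_span [Finite ι] {Q : QuadraticForm ℚ_[p] V}
    {c : Module.Basis ι ℚ_[p] V} {σ : Equiv.Perm ι} (hc : IsUnitMonomialGram Q c σ) :
    IsUnimodularLattice p Q (span ℤ_[p] (Set.range c)) := by
  have := Fintype.ofFinite ι
  refine ⟨fg_span (Set.finite_range c), by rw [span_span_of_tower, c.span_eq], ?_⟩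
  ext w
  change w ∈ span ℤ_[p] _ ↔ ∀ l ∈ span ℤ_[p] _, _
  rw [forall_mem_span_norm_polar_le_one_iff, Set.forall_mem_range, ← σ.forall_congr_right,
    mem_span_basis_iff_norm_repr_le_one]
  simp only [hc.norm_polar_basis]

theorem card_quotient_span_basis_of_norm_repr_lt_one (c : Module.Basis ι ℚ_[p] V) (i : ι)
    (K : Submodule ℤ_[p] V)
    (hK : ∀ v ∈ span ℤ_[p] (Set.range c), v ∈ K ↔ ‖c.repr v i‖ < 1) :
    Nat.card (span ℤ_[p] (Set.range c) ⧸ K.comap (span ℤ_[p] (Set.range c)).subtype) = p := by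
  let f := (c.restrictScalars ℤ_[p]).coord i
  have hf : Function.Surjective f := fun z => ⟨z • c.restrictScalars ℤ_[p] i, by simp [f]⟩
  have hK' : K.comap (span ℤ_[p] (Set.range c)).subtype =
      Submodule.comap f (maximalIdeal ℤ_[p]) := by
    ext v
    rw [mem_comap, mem_comap, subtype_apply, hK v v.2, mem_maximalIdeal, PadicInt.mem_nonunits,
      ← c.restrictScalars_repr_apply ℤ_[p], PadicInt.algebraMap_apply, PadicInt.norm_def]
    rfl
  rw [hK', PadicInt.card_quotient_comap_maximalIdeal hf]

theorem mem_weightedLattice_iff {b : Module.Basis ι ℚ_[p] V} {t : ι → ℚ_[p]} (ht : ∀ i, t i ≠ 0)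
    {v : V} : v ∈ weightedLattice b t ↔ ∀ i, ‖b.repr v i‖ ≤ ‖t i‖ := by
  rw [weightedLattice_eq_span_isUnitSMul b ht, mem_span_basis_iff_norm_repr_le_one]
  refine forall_congr' fun i => ?_
  rw [b.norm_repr_isUnitSMul ht, div_le_one (norm_pos_iff.2 (ht i))]

theorem IsUnitMonomialGram.isUnimodularLattice_weightedLattice [Finite ι]
    {Q : QuadraticForm ℚ_[p] V} {b : Module.Basis ι ℚ_[p] V} {σ : Equiv.Perm ι}
    (hb : IsUnitMonomialGram Q b σ) {t : ι → ℚ_[p]} (ht : ∀ i, ‖t i‖ * ‖t (σ i)‖ = 1) :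
    IsUnimodularLattice p Q (weightedLattice b t) := by
  have ht0 : ∀ i, t i ≠ 0 := fun i h => by simpa [h] using ht i
  rw [weightedLattice_eq_span_isUnitSMul b ht0]
  refine IsUnitMonomialGram.isUnimodularLattice_span (σ := σ) ?_
  convert hb.smul ht using 1
  ext i
  exact Module.Basis.isUnitSMul_apply _ i

theorem card_quotient_weightedLattice_inf (b : Module.Basis ι ℚ_[p] V) {t t' : ι → ℚ_[p]}
    (ht : ∀ i, t i ≠ 0) (ht' : ∀ i, t' i ≠ 0) {i₀ : ι} (hi₀ : t' i₀ = p * t i₀)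
    (hle : ∀ i ≠ i₀, ‖t i‖ ≤ ‖t' i‖) :
    Nat.card (weightedLattice b t ⧸
      (weightedLattice b t ⊓ weightedLattice b t').comap (weightedLattice b t).subtype) = p := by
  have hmem : ∀ v ∈ weightedLattice b t, ∀ i, ‖b.repr v i‖ ≤ ‖t i‖ :=
    fun v hv => (mem_weightedLattice_iff ht).1 hv
  rw [weightedLattice_eq_span_isUnitSMul b ht] at hmem ⊢
  refine card_quotient_span_basis_of_norm_repr_lt_one _ i₀ _ fun v hv => ?_
  rw [mem_inf, and_iff_right hv, mem_weightedLattice_iff ht', b.norm_repr_isUnitSMul ht,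
    div_lt_one (norm_pos_iff.2 (ht i₀)), ← Padic.norm_le_norm_p_mul_iff_lt (ht i₀), ← hi₀]
  refine ⟨fun h => h i₀, fun h i => ?_⟩
  by_cases hi : i = i₀
  · exact hi ▸ h
  · exact (hmem v hv i).trans (hle i hi)

end Lattice

section Weights

variable {p : ℕ} [Fact p.Prime]

noncomputable def hyperbolicWeights (p : ℕ) [Fact p.Prime] (k : ℤ) : Fin 3 → ℚ_[p] :=
  ![(p : ℚ_[p]) ^ k, 1, (p : ℚ_[p]) ^ (-k)]

theorem hyperbolicWeights_ne_zero (k : ℤ) (i : Fin 3) : hyperbolicWeights p k i ≠ 0 := by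
  fin_cases i <;> simp [hyperbolicWeights] <;> exact zpow_ne_zero _ Padic.natCast_p_ne_zero

theorem norm_hyperbolicWeights_mul_rev (k : ℤ) (i : Fin 3) :
    ‖hyperbolicWeights p k i‖ * ‖hyperbolicWeights p k (Fin.revPerm i)‖ = 1 := by
  have hp : (p : ℝ) ≠ 0 := Nat.cast_ne_zero.2 (Fact.out : p.Prime).ne_zero
  fin_cases i <;> simp [hyperbolicWeights, zpow_ne_zero, hp]

theorem hyperbolicWeights_succ_zero (k : ℤ) :
    hyperbolicWeights p (k + 1) 0 = p * hyperbolicWeights p k 0 := by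
  simp [hyperbolicWeights, zpow_add_one₀ Padic.natCast_p_ne_zero, mul_comm]

theorem hyperbolicWeights_two (k : ℤ) :
    hyperbolicWeights p k 2 = p * hyperbolicWeights p (k + 1) 2 := by
  simp only [hyperbolicWeights, Matrix.cons_val_two, Matrix.tail_cons, Matrix.head_cons]
  rw [neg_add, zpow_add₀ Padic.natCast_p_ne_zero, zpow_neg_one, mul_comm,
    inv_mul_cancel_right₀ Padic.natCast_p_ne_zero]

theorem norm_hyperbolicWeights_le_succ (k : ℤ) {i : Fin 3} (hi : i ≠ 0) :
    ‖hyperbolicWeights p k i‖ ≤ ‖hyperbolicWeights p (k + 1) i‖ := by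
  have hp : (1 : ℝ) ≤ p := by exact_mod_cast (Fact.out : p.Prime).one_lt.le
  fin_cases i
  · exact absurd rfl hi
  · simp [hyperbolicWeights]
  · simpa [hyperbolicWeights, Padic.norm_p_zpow] using
      zpow_le_zpow_right₀ hp (by omega : k ≤ k + 1)

theorem norm_hyperbolicWeights_succ_le (k : ℤ) {i : Fin 3} (hi : i ≠ 2) :
    ‖hyperbolicWeights p (k + 1) i‖ ≤ ‖hyperbolicWeights p k i‖ := by
  have hp : (1 : ℝ) ≤ p := by exact_mod_cast (Fact.out : p.Prime).one_lt.le
  fin_cases i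
  · simpa [hyperbolicWeights, Padic.norm_p_zpow] using
      zpow_le_zpow_right₀ hp (by omega : -(k + 1) ≤ -k)
  · simp [hyperbolicWeights]
  · exact absurd rfl hi

end Weights

theorem Matrix.range_vecCons_three {α : Type*} (a b c : α) :
    Set.range ![a, b, c] = {a, b, c} := by
  rw [Matrix.range_cons, Matrix.range_cons_cons_empty, Set.singleton_union]

/-- For `L = L[ϖ] ⊕ L[1] ⊕ L[ϖ⁻¹] = ⟨w⁺, e, w⁻⟩` with `w⁺, w⁻` isotropic and
pairing to a unit, `e` unimodular and orthogonal to both, the lattices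
`L_j = ⟨p^j w⁺, e, p^{−j} w⁻⟩` are unimodular and `L_j`, `L_{j+1}` are `p`-neighbours. -/
theorem stmt11 (p : ℕ) [Fact p.Prime]
    (V : Type*) [AddCommGroup V] [Module ℚ_[p] V] [Module ℤ_[p] V]
    [IsScalarTower ℤ_[p] ℚ_[p] V]
    (Q : QuadraticForm ℚ_[p] V)
    (wp e wm : V)
    (hli : LinearIndependent ℚ_[p] ![wp, e, wm])
    (hspan : Submodule.span ℚ_[p] ({wp, e, wm} : Set V) = ⊤)
    (hQwp : Q wp = 0) (hQwm : Q wm = 0)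
    (hpair : ‖QuadraticMap.polar (⇑Q) wp wm‖ = 1)
    (hoe1 : QuadraticMap.polar (⇑Q) wp e = 0)
    (hoe2 : QuadraticMap.polar (⇑Q) wm e = 0)
    (he : ‖QuadraticMap.polar (⇑Q) e e‖ = 1)
    (L : ℤ → Submodule ℤ_[p] V)
    (hL : ∀ j : ℤ, L j = Submodule.span ℤ_[p]
      ({((p : ℚ_[p]) ^ j) • wp, e, ((p : ℚ_[p]) ^ (-j)) • wm} : Set V)) :
    ∀ j : ℤ, IsUnimodularLattice p Q (L j) ∧
      Nat.card (↥(L j) ⧸ Submodule.comap (L j).subtype (L j ⊓ L (j + 1))) = p ∧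
      Nat.card (↥(L (j + 1)) ⧸ Submodule.comap (L (j + 1)).subtype (L j ⊓ L (j + 1))) = p := by
  let b : Module.Basis (Fin 3) ℚ_[p] V := .mk hli (by rw [Matrix.range_vecCons_three, hspan])
  have hb : ⇑b = ![wp, e, wm] := Module.Basis.coe_mk _ _
  have hG : IsUnitMonomialGram Q b Fin.revPerm := by
    rw [hb]; exact isUnitMonomialGram_of_hyperbolic hQwp hQwm hpair hoe1 hoe2 he
  have hLw : ∀ k, L k = weightedLattice b (hyperbolicWeights p k) := by
    intro k
    have hgen : (fun i => hyperbolicWeights p k i • b i) =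
        ![(p : ℚ_[p]) ^ k • wp, e, (p : ℚ_[p]) ^ (-k) • wm] := by
      ext i
      fin_cases i <;> simp [hb, hyperbolicWeights]
    rw [hL, weightedLattice, hgen, Matrix.range_vecCons_three]
  intro j
  rw [hLw j, hLw (j + 1)]
  refine ⟨hG.isUnimodularLattice_weightedLattice (norm_hyperbolicWeights_mul_rev j),
    card_quotient_weightedLattice_inf b (hyperbolicWeights_ne_zero j)
      (hyperbolicWeights_ne_zero (j + 1)) (hyperbolicWeights_succ_zero j)
      fun i hi => norm_hyperbolicWeights_le_succ j hi, ?_⟩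
  rw [inf_comm]
  exact card_quotient_weightedLattice_inf b (hyperbolicWeights_ne_zero (j + 1))
    (hyperbolicWeights_ne_zero j) (hyperbolicWeights_two j)
    fun i hi => norm_hyperbolicWeights_succ_le j hi
end
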